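/- Let A be a unital *-subalgebra of B(H) with Wedderburn decomposition A = U(⊕_{k=1}^K B(H_{F,k}) ⊗ 1_{G,k})U*, and let R, J be the CPTP factors of the orthogonal conditional expectation onto A. For C ∈ B(H), write C = Σ_{j,k,ℓ} V_j (C^{(j,k)}_{ℓ,F} ⊗ G^{(j,k)}_ℓ) V_k* using orthonormal operator bases {G^{(j,k)}_ℓ} of B(H_{G,j}, H_{G,k}). Define for each block-diagonal index e and each ℓ the operator Č_{ℓ,e} = Σ_k W_{k−e} (C^{(k−e,k)}_{ℓ,F}/dim(H_{G,k})^{1/2}) W_k*. Then R(C J(ρ̌) C*) = Σ_{ℓ,e} Č_{ℓ,e} ρ̌ Č_{ℓ,e}* for every ρ̌ in the reduced algebra Ǎ. -/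

import Mathlib

/-! STATEMENT 4: Kraus reduction of the CP map ρ ↦ CρC* through the CPTP factors of the
orthogonal conditional expectation, using the operator-Schmidt block decomposition of C. -/

open Matrix
open scoped Kronecker BigOperators

noncomputable section

abbrev Mat (n : ℕ) : Type := Matrix (Fin n) (Fin n) ℂ

/-- Partial trace over the second tensor factor. -/
def ptrG {a b : ℕ} (M : Matrix (Fin a × Fin b) (Fin a × Fin b) ℂ) :
    Matrix (Fin a) (Fin a) ℂ :=
  Matrix.of fun i j => ∑ g : Fin b, M (i, g) (j, g)

variable {K n m : ℕ} {dF dG : Fin K → ℕ}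

/-- The reduction map `R : B(H) → Ǎ`, `R(X) = ⊕ₖ tr_{G,k}(Vₖ* X Vₖ)`. -/
def Rmap (V : ∀ k : Fin K, Matrix (Fin n) (Fin (dF k) × Fin (dG k)) ℂ)
    (W : ∀ k : Fin K, Matrix (Fin m) (Fin (dF k)) ℂ) (X : Mat n) : Mat m :=
  ∑ k : Fin K, W k * ptrG ((V k)ᴴ * X * V k) * (W k)ᴴ

/-- The injection map `J : Ǎ → B(H)`, `J(ρ̌) = ⊕ₖ ρ̌ₖ ⊗ 1_{G,k}/dim H_{G,k}`. -/
def Jmap (V : ∀ k : Fin K, Matrix (Fin n) (Fin (dF k) × Fin (dG k)) ℂ)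
    (W : ∀ k : Fin K, Matrix (Fin m) (Fin (dF k)) ℂ) (ρ : Mat m) : Mat n :=
  ∑ k : Fin K, V k *
    (((W k)ᴴ * ρ * W k) ⊗ₖ (((dG k : ℂ))⁻¹ • (1 : Matrix (Fin (dG k)) (Fin (dG k)) ℂ))) *
    (V k)ᴴ

/-- The Hilbert–Schmidt adjoint of `J`, `J*(X) = ⊕ₖ tr_{G,k}(Vₖ* X Vₖ)/dim H_{G,k}`. -/
def Jstar (V : ∀ k : Fin K, Matrix (Fin n) (Fin (dF k) × Fin (dG k)) ℂ)
    (W : ∀ k : Fin K, Matrix (Fin m) (Fin (dF k)) ℂ) (X : Mat n) : Mat m :=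
  ∑ k : Fin K, ((dG k : ℂ))⁻¹ • (W k * ptrG ((V k)ᴴ * X * V k) * (W k)ᴴ)

/-- Membership in the reduced algebra `Ǎ = ⊕ₖ B(H_{F,k})`: block-diagonal matrices. -/
def IsBlockDiag (W : ∀ k : Fin K, Matrix (Fin m) (Fin (dF k)) ℂ) (ρ : Mat m) : Prop :=
  ρ = ∑ k : Fin K, (W k * (W k)ᴴ) * ρ * (W k * (W k)ᴴ)

/-- The reduced Kraus operators `Č_{ℓ,e} = Σ_k W_{k-e} (C^{(k-e,k)}_{ℓ,F}/√dim(H_{G,k})) W_k*`,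
indexed by the Schmidt index `ℓ` and the block-diagonal index `e ∈ ℤ`. -/
def redKraus (dG : Fin K → ℕ) (W : ∀ k : Fin K, Matrix (Fin m) (Fin (dF k)) ℂ)
    {d : ℕ} (CF : ∀ j k : Fin K, Fin d → Matrix (Fin (dF j)) (Fin (dF k)) ℂ)
    (ℓ : Fin d) (e : ℤ) : Mat m :=
  ∑ j : Fin K, ∑ k : Fin K,
    if ((k : ℤ) - (j : ℤ) = e) then
      ((Real.sqrt (dG k) : ℂ))⁻¹ • (W j * CF j k ℓ * (W k)ᴴ)
    else 0

/-! Both sides equal `∑ j k ℓ, (dim H_{G,k})⁻¹ • W_j C^{(j,k)}_ℓ ρ̌_k C^{(j,k)*}_ℓ W_j*`.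
On the left, the Schmidt factors `G^{(j,k)}_ℓ` are orthonormal, so the double Schmidt sum in
`C J(ρ̌) C*` collapses to its diagonal under the partial trace. On the right, `ρ̌` is block
diagonal, so in `Č_{ℓ,e} ρ̌ Č_{ℓ,e}*` the products of summands with different column blocks `k`
vanish, and on the diagonal `e` the column block determines the row block `j = k - e`. -/

theorem ptrG_kronecker {a b : ℕ} (A : Matrix (Fin a) (Fin a) ℂ) (B : Matrix (Fin b) (Fin b) ℂ) :
    ptrG (A ⊗ₖ B) = B.trace • A := by
  ext i j
  simp only [ptrG, of_apply, kroneckerMap_apply, Matrix.smul_apply, trace, diag, smul_eq_mul,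
    Finset.sum_mul]
  exact Finset.sum_congr rfl fun g _ => mul_comm _ _

theorem ptrG_sum {a b : ℕ} {ι : Type*} (s : Finset ι)
    (M : ι → Matrix (Fin a × Fin b) (Fin a × Fin b) ℂ) :
    ptrG (∑ i ∈ s, M i) = ∑ i ∈ s, ptrG (M i) := by
  ext i j
  simp only [ptrG, of_apply, Matrix.sum_apply]
  exact Finset.sum_comm

theorem ptrG_smul {a b : ℕ} (c : ℂ) (M : Matrix (Fin a × Fin b) (Fin a × Fin b) ℂ) :
    ptrG (c • M) = c • ptrG M := by
  ext i j
  simp only [ptrG, of_apply, Matrix.smul_apply, smul_eq_mul, Finset.mul_sum]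

theorem ptrG_kronecker_mul_mul_conjTranspose {a a' b b' : ℕ}
    (A A' : Matrix (Fin a) (Fin a') ℂ) (B B' : Matrix (Fin b) (Fin b') ℂ)
    (X : Matrix (Fin a') (Fin a') ℂ) (c : ℂ) :
    ptrG ((A ⊗ₖ B) * (X ⊗ₖ (c • (1 : Matrix (Fin b') (Fin b') ℂ))) * (A' ⊗ₖ B')ᴴ) =
      (c * (B'ᴴ * B).trace) • (A * X * A'ᴴ) := by
  rw [conjTranspose_kronecker, kronecker_smul, Matrix.mul_smul, Matrix.smul_mul,
    ← mul_kronecker_mul, ← mul_kronecker_mul, Matrix.mul_one, ptrG_smul, ptrG_kronecker,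
    trace_mul_comm, smul_smul]

theorem ptrG_schmidt_mul_mul_conjTranspose {ι : Type*} [Fintype ι] {a a' b b' : ℕ}
    (A : ι → Matrix (Fin a) (Fin a') ℂ) (B : ι → Matrix (Fin b) (Fin b') ℂ)
    (hBorth : ∀ ℓ f, ℓ ≠ f → ((B ℓ)ᴴ * B f).trace = 0)
    (hBnorm : ∀ ℓ, B ℓ ≠ 0 → ((B ℓ)ᴴ * B ℓ).trace = 1)
    (hpad : ∀ ℓ, B ℓ = 0 → A ℓ = 0) (X : Matrix (Fin a') (Fin a') ℂ) (c : ℂ) :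
    ptrG ((∑ ℓ, A ℓ ⊗ₖ B ℓ) * (X ⊗ₖ (c • (1 : Matrix (Fin b') (Fin b') ℂ))) *
        (∑ ℓ, A ℓ ⊗ₖ B ℓ)ᴴ) =
      c • ∑ ℓ, A ℓ * X * (A ℓ)ᴴ := by
  have hdiag : ∀ ℓ, ((B ℓ)ᴴ * B ℓ).trace • A ℓ = A ℓ := fun ℓ => by
    by_cases hB : B ℓ = 0
    · simp [hpad ℓ hB]
    · rw [hBnorm ℓ hB, one_smul]
  simp only [conjTranspose_sum, Matrix.mul_sum, Matrix.sum_mul, ptrG_sum,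
    ptrG_kronecker_mul_mul_conjTranspose, Finset.smul_sum]
  refine Finset.sum_congr rfl fun ℓ _ => ?_
  rw [Finset.sum_eq_single ℓ (fun f _ hf => by rw [hBorth ℓ f (Ne.symm hf), mul_zero, zero_smul])
    (fun h => absurd (Finset.mem_univ ℓ) h), mul_smul]
  congr 1
  rw [← Matrix.smul_mul, ← Matrix.smul_mul, hdiag]

section Blocks

variable {α : Type*} [Semiring α] [StarRing α] {o ι : Type*} [Fintype o] [Fintype ι]
  {κ : ι → Type*} [∀ i, Fintype (κ i)]

theorem conjTranspose_mul_sum_mul_sum {o' : Type*} [Fintype o'] (V : ∀ i, Matrix o (κ i) α)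
    (C : Matrix o' o α) (N : ∀ i, Matrix (κ i) (κ i) α) {r : Type*} (U : Matrix o' r α) :
    Uᴴ * (C * (∑ i, V i * N i * (V i)ᴴ) * Cᴴ) * U =
      ∑ i, (Uᴴ * C * V i) * N i * (Uᴴ * C * V i)ᴴ := by
  simp only [Matrix.mul_sum, Matrix.sum_mul, conjTranspose_mul, conjTranspose_conjTranspose,
    Matrix.mul_assoc]

theorem conjTranspose_mul_blockSum_mul [DecidableEq ι] [∀ i, DecidableEq (κ i)]
    (V : ∀ i, Matrix o (κ i) α) (hortho : ∀ i, (V i)ᴴ * V i = 1)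
    (hdisj : ∀ i j, i ≠ j → (V i)ᴴ * V j = 0) (M : ∀ i j, Matrix (κ i) (κ j) α) (i j : ι) :
    (V i)ᴴ * (∑ p, ∑ q, V p * M p q * (V q)ᴴ) * V j = M i j := by
  have hterm : ∀ p q, (V i)ᴴ * (V p * M p q * (V q)ᴴ) * V j =
      ((V i)ᴴ * V p) * M p q * ((V q)ᴴ * V j) := fun p q => by
    simp only [Matrix.mul_assoc]
  simp only [Matrix.mul_sum, Matrix.sum_mul, hterm]
  rw [Fintype.sum_eq_single i fun p hp => Finset.sum_eq_zero fun q _ => by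
      rw [hdisj i p (Ne.symm hp), Matrix.zero_mul, Matrix.zero_mul],
    Fintype.sum_eq_single j fun q hq => by rw [hdisj q j hq, Matrix.mul_zero],
    hortho, hortho, Matrix.one_mul, Matrix.mul_one]

end Blocks

theorem sum_fiberwise_mul_mul_conjTranspose {α : Type*} [Semiring α] [StarRing α]
    {ι β o o' : Type*} [Fintype ι] [DecidableEq β] [Fintype o']
    (s : Finset β) (δ : ι → β) (hδ : ∀ p, δ p ∈ s) (T : ι → Matrix o o' α)
    (ρ : Matrix o' o' α) (hT : ∀ p p', δ p = δ p' → p ≠ p' → T p * ρ * (T p')ᴴ = 0) :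
    ∑ e ∈ s, (∑ p with δ p = e, T p) * ρ * (∑ p with δ p = e, T p)ᴴ =
      ∑ p, T p * ρ * (T p)ᴴ := by
  calc _ = ∑ e ∈ s, ∑ p with δ p = e, T p * ρ * (T p)ᴴ := by
        refine Finset.sum_congr rfl fun e _ => ?_
        simp only [conjTranspose_sum, Matrix.mul_sum, Matrix.sum_mul]
        refine Finset.sum_congr rfl fun p hp => Finset.sum_eq_single_of_mem p hp ?_
        intro p' hp' hne
        rw [Finset.mem_filter] at hp hp'
        exact hT p' p (hp'.2.trans hp.2.symm) hne
    _ = _ := Finset.sum_fiberwise_of_maps_to (fun p _ => hδ p) _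

theorem IsBlockDiag.conjTranspose_mul_mul_eq_zero
    {W : ∀ k : Fin K, Matrix (Fin m) (Fin (dF k)) ℂ}
    {ρ : Mat m} (hρ : IsBlockDiag W ρ) (hWdisj : ∀ j k, j ≠ k → (W j)ᴴ * W k = 0)
    {k k' : Fin K} (hk : k ≠ k') : (W k)ᴴ * ρ * W k' = 0 := by
  rw [hρ, Matrix.mul_sum, Matrix.sum_mul]
  refine Finset.sum_eq_zero fun r _ => ?_
  have hr : (W k)ᴴ * (W r * (W r)ᴴ * ρ * (W r * (W r)ᴴ)) * W k' =
      ((W k)ᴴ * W r) * ((W r)ᴴ * ρ * W r) * ((W r)ᴴ * W k') := by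
    simp only [Matrix.mul_assoc]
  by_cases hkr : k = r
  · rw [hr, ← hkr, hWdisj k k' hk, Matrix.mul_zero]
  · rw [hr, hWdisj k r hkr, Matrix.zero_mul, Matrix.zero_mul]

def krausBlock (dG : Fin K → ℕ) (W : ∀ k : Fin K, Matrix (Fin m) (Fin (dF k)) ℂ)
    {d : ℕ} (CF : ∀ j k : Fin K, Fin d → Matrix (Fin (dF j)) (Fin (dF k)) ℂ)
    (ℓ : Fin d) (p : Fin K × Fin K) : Mat m :=
  ((Real.sqrt (dG p.2) : ℂ))⁻¹ • (W p.1 * CF p.1 p.2 ℓ * (W p.2)ᴴ)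

theorem redKraus_eq_sum_krausBlock (dG : Fin K → ℕ)
    (W : ∀ k : Fin K, Matrix (Fin m) (Fin (dF k)) ℂ) {d : ℕ}
    (CF : ∀ j k : Fin K, Fin d → Matrix (Fin (dF j)) (Fin (dF k)) ℂ) (ℓ : Fin d) (e : ℤ) :
    redKraus dG W CF ℓ e =
      ∑ p with (p.2 : ℤ) - (p.1 : ℤ) = e, krausBlock dG W CF ℓ p := by
  rw [Finset.sum_filter, Fintype.sum_prod_type]
  rfl

theorem krausBlock_mul_mul_conjTranspose (dG : Fin K → ℕ)
    (W : ∀ k : Fin K, Matrix (Fin m) (Fin (dF k)) ℂ) {d : ℕ}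
    (CF : ∀ j k : Fin K, Fin d → Matrix (Fin (dF j)) (Fin (dF k)) ℂ) (ℓ : Fin d)
    (ρ : Mat m) (p p' : Fin K × Fin K) :
    krausBlock dG W CF ℓ p * ρ * (krausBlock dG W CF ℓ p')ᴴ =
      ((Real.sqrt (dG p.2) : ℂ)⁻¹ * (Real.sqrt (dG p'.2) : ℂ)⁻¹) •
        (W p.1 * (CF p.1 p.2 ℓ * ((W p.2)ᴴ * ρ * W p'.2) * (CF p'.1 p'.2 ℓ)ᴴ) * (W p'.1)ᴴ) := by
  simp only [krausBlock, conjTranspose_smul, conjTranspose_mul, conjTranspose_conjTranspose,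
    Matrix.smul_mul, Matrix.mul_smul, smul_smul, Matrix.mul_assoc, ← Complex.ofReal_inv,
    Complex.star_def, Complex.conj_ofReal]
  exact congrArg₂ _ (mul_comm _ _) rfl

theorem sum_redKraus_mul_mul_conjTranspose {W : ∀ k : Fin K, Matrix (Fin m) (Fin (dF k)) ℂ}
    {ρ : Mat m} (hρ : IsBlockDiag W ρ) (hWdisj : ∀ j k, j ≠ k → (W j)ᴴ * W k = 0)
    (dG : Fin K → ℕ) {d : ℕ} (CF : ∀ j k : Fin K, Fin d → Matrix (Fin (dF j)) (Fin (dF k)) ℂ) :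
    ∑ e ∈ Finset.Icc (-(K : ℤ) + 1) ((K : ℤ) - 1), ∑ ℓ : Fin d,
        redKraus dG W CF ℓ e * ρ * (redKraus dG W CF ℓ e)ᴴ =
      ∑ ℓ : Fin d, ∑ p : Fin K × Fin K, ((dG p.2 : ℂ))⁻¹ •
        (W p.1 * (CF p.1 p.2 ℓ * ((W p.2)ᴴ * ρ * W p.2) * (CF p.1 p.2 ℓ)ᴴ) * (W p.1)ᴴ) := by
  rw [Finset.sum_comm]
  refine Finset.sum_congr rfl fun ℓ _ => ?_
  simp only [redKraus_eq_sum_krausBlock]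
  refine (sum_fiberwise_mul_mul_conjTranspose _ (fun p : Fin K × Fin K => (p.2 : ℤ) - p.1)
    ?_ _ _ ?_).trans (Finset.sum_congr rfl fun p _ => ?_)
  · intro p
    have := p.1.isLt
    have := p.2.isLt
    simp only [Finset.mem_Icc]
    omega
  · intro p p' hδ hne
    have hk : p.2 ≠ p'.2 := fun hk => hne (Prod.ext (Fin.ext (by omega)) hk)
    rw [krausBlock_mul_mul_conjTranspose, hρ.conjTranspose_mul_mul_eq_zero hWdisj hk,
      Matrix.mul_zero, Matrix.zero_mul, Matrix.mul_zero, Matrix.zero_mul, smul_zero]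
  · rw [krausBlock_mul_mul_conjTranspose, ← mul_inv, ← Complex.ofReal_mul,
      Real.mul_self_sqrt (Nat.cast_nonneg _), Complex.ofReal_natCast]

theorem Rmap_mul_Jmap_mul_conjTranspose
    {V : ∀ k : Fin K, Matrix (Fin n) (Fin (dF k) × Fin (dG k)) ℂ}
    (hVortho : ∀ k, (V k)ᴴ * V k = 1) (hVdisj : ∀ j k, j ≠ k → (V j)ᴴ * V k = 0)
    (W : ∀ k : Fin K, Matrix (Fin m) (Fin (dF k)) ℂ) {d : ℕ} {C : Mat n}
    {CF : ∀ j k : Fin K, Fin d → Matrix (Fin (dF j)) (Fin (dF k)) ℂ}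
    {GG : ∀ j k : Fin K, Fin d → Matrix (Fin (dG j)) (Fin (dG k)) ℂ}
    (hC : C = ∑ j : Fin K, ∑ k : Fin K, ∑ ℓ : Fin d,
      V j * ((CF j k ℓ) ⊗ₖ (GG j k ℓ)) * (V k)ᴴ)
    (hGorth : ∀ (j k : Fin K) (ℓ f : Fin d), ℓ ≠ f → ((GG j k ℓ)ᴴ * GG j k f).trace = 0)
    (hGnorm : ∀ (j k : Fin K) (ℓ : Fin d), GG j k ℓ ≠ 0 → ((GG j k ℓ)ᴴ * GG j k ℓ).trace = 1)
    (hpad : ∀ (j k : Fin K) (ℓ : Fin d), GG j k ℓ = 0 → CF j k ℓ = 0) (ρ : Mat m) :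
    Rmap V W (C * Jmap V W ρ * Cᴴ) =
      ∑ ℓ : Fin d, ∑ p : Fin K × Fin K, ((dG p.2 : ℂ))⁻¹ •
        (W p.1 * (CF p.1 p.2 ℓ * ((W p.2)ᴴ * ρ * W p.2) * (CF p.1 p.2 ℓ)ᴴ) * (W p.1)ᴴ) := by
  have hblock : ∀ j k, (V j)ᴴ * C * V k = ∑ ℓ, CF j k ℓ ⊗ₖ GG j k ℓ := by
    have hC' : C = ∑ j, ∑ k, V j * (∑ ℓ, CF j k ℓ ⊗ₖ GG j k ℓ) * (V k)ᴴ := by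
      simp only [hC, Matrix.mul_sum, Matrix.sum_mul]
    rw [hC']
    exact conjTranspose_mul_blockSum_mul V hVortho hVdisj _
  calc _ = ∑ j, ∑ k, ∑ ℓ, ((dG k : ℂ))⁻¹ •
        (W j * (CF j k ℓ * ((W k)ᴴ * ρ * W k) * (CF j k ℓ)ᴴ) * (W j)ᴴ) := by
        refine Finset.sum_congr rfl fun j _ => ?_
        rw [Jmap, conjTranspose_mul_sum_mul_sum, ptrG_sum, Matrix.mul_sum, Matrix.sum_mul]
        refine Finset.sum_congr rfl fun k _ => ?_
        rw [hblock, ptrG_schmidt_mul_mul_conjTranspose _ _ (hGorth j k) (hGnorm j k) (hpad j k),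
          Matrix.mul_smul, Matrix.smul_mul, Matrix.mul_sum, Matrix.sum_mul, Finset.smul_sum]
    _ = _ := by
        simp only [Fintype.sum_prod_type]
        exact Finset.sum_comm_cycle

theorem reduced_Kraus_representation_general
    (V : ∀ k : Fin K, Matrix (Fin n) (Fin (dF k) × Fin (dG k)) ℂ)
    (W : ∀ k : Fin K, Matrix (Fin m) (Fin (dF k)) ℂ)
    (hVortho : ∀ k, (V k)ᴴ * V k = 1)
    (hVdisj : ∀ j k, j ≠ k → (V j)ᴴ * V k = 0)
    (hWdisj : ∀ j k, j ≠ k → (W j)ᴴ * W k = 0)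
    {d : ℕ} (C : Mat n)
    (CF : ∀ j k : Fin K, Fin d → Matrix (Fin (dF j)) (Fin (dF k)) ℂ)
    (GG : ∀ j k : Fin K, Fin d → Matrix (Fin (dG j)) (Fin (dG k)) ℂ)
    -- operator-Schmidt block decomposition of C
    (hC : C = ∑ j : Fin K, ∑ k : Fin K, ∑ ℓ : Fin d,
      V j * ((CF j k ℓ) ⊗ₖ (GG j k ℓ)) * (V k)ᴴ)
    -- orthonormality of the G-side Schmidt bases (padded with zeros)
    (hGorth : ∀ (j k : Fin K) (ℓ f : Fin d), ℓ ≠ f → ((GG j k ℓ)ᴴ * GG j k f).trace = 0)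
    (hGnorm : ∀ (j k : Fin K) (ℓ : Fin d), GG j k ℓ ≠ 0 → ((GG j k ℓ)ᴴ * GG j k ℓ).trace = 1)
    (hpad : ∀ (j k : Fin K) (ℓ : Fin d), GG j k ℓ = 0 → CF j k ℓ = 0) :
    ∀ ρ : Mat m, IsBlockDiag W ρ →
      Rmap V W (C * Jmap V W ρ * Cᴴ) =
        ∑ e ∈ Finset.Icc (-(K : ℤ) + 1) ((K : ℤ) - 1), ∑ ℓ : Fin d,
          redKraus dG W CF ℓ e * ρ * (redKraus dG W CF ℓ e)ᴴ := by
  intro ρ hρ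
  rw [Rmap_mul_Jmap_mul_conjTranspose hVortho hVdisj W hC hGorth hGnorm hpad,
    sum_redKraus_mul_mul_conjTranspose hρ hWdisj]

theorem reduced_Kraus_representation
    (V : ∀ k : Fin K, Matrix (Fin n) (Fin (dF k) × Fin (dG k)) ℂ)
    (W : ∀ k : Fin K, Matrix (Fin m) (Fin (dF k)) ℂ)
    (hVortho : ∀ k, (V k)ᴴ * V k = 1)
    (hVdisj : ∀ j k, j ≠ k → (V j)ᴴ * V k = 0)
    (hVcomplete : ∑ k : Fin K, V k * (V k)ᴴ = 1)
    (hWortho : ∀ k, (W k)ᴴ * W k = 1)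
    (hWdisj : ∀ j k, j ≠ k → (W j)ᴴ * W k = 0)
    (hWcomplete : ∑ k : Fin K, W k * (W k)ᴴ = 1)
    (hdG : ∀ k, 0 < dG k)
    {d : ℕ} (C : Mat n)
    (CF : ∀ j k : Fin K, Fin d → Matrix (Fin (dF j)) (Fin (dF k)) ℂ)
    (GG : ∀ j k : Fin K, Fin d → Matrix (Fin (dG j)) (Fin (dG k)) ℂ)
    -- operator-Schmidt block decomposition of C
    (hC : C = ∑ j : Fin K, ∑ k : Fin K, ∑ ℓ : Fin d,
      V j * ((CF j k ℓ) ⊗ₖ (GG j k ℓ)) * (V k)ᴴ)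
    -- orthonormality of the G-side Schmidt bases (padded with zeros)
    (hGorth : ∀ (j k : Fin K) (ℓ f : Fin d), ℓ ≠ f → ((GG j k ℓ)ᴴ * GG j k f).trace = 0)
    (hGnorm : ∀ (j k : Fin K) (ℓ : Fin d), GG j k ℓ ≠ 0 → ((GG j k ℓ)ᴴ * GG j k ℓ).trace = 1)
    (hpad : ∀ (j k : Fin K) (ℓ : Fin d), GG j k ℓ = 0 → CF j k ℓ = 0) :
    ∀ ρ : Mat m, IsBlockDiag W ρ →
      Rmap V W (C * Jmap V W ρ * Cᴴ) =
        ∑ e ∈ Finset.Icc (-(K : ℤ) + 1) ((K : ℤ) - 1), ∑ ℓ : Fin d,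
          redKraus dG W CF ℓ e * ρ * (redKraus dG W CF ℓ e)ᴴ :=
  reduced_Kraus_representation_general V W hVortho hVdisj hWdisj C CF GG hC hGorth hGnorm hpad

end
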